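/- Let ξ : ℤ → {0,1} be a recurrent bi-infinite word. If some factor u of ξ is left-determining in F(ξ) (for every k ∈ ℕ there is exactly one word v·u ∈ F(ξ) with |v| = k), then ξ is periodic. -/

import Mathlib

/-!
Left-determinacy makes any two occurrences of `u` agree on everything to their left: if `u` occurs
at `a` and at `b`, then `ξ n = ξ (n + (b - a))` for all `n < a`. Recurrence gives occurrences
`b < a` and, for each `n`, a third one `m > n + (a - b)`; comparing `m` with `a` and with `b` sends
both `ξ n` and `ξ (n + (a - b))` to `ξ (n + (a - m))`, so `a - b` is a period.
-/

/-- `u` occurs in the bi-infinite word `ξ` starting at position `i`. -/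
def FactorAt (ξ : ℤ → Bool) (u : List Bool) (i : ℤ) : Prop :=
  ∀ k : ℕ, k < u.length → u.getD k false = ξ (i + k)

/-- The set of finite factors of the bi-infinite word `ξ`. -/
def Factors (ξ : ℤ → Bool) : Set (List Bool) :=
  {u | ∃ i : ℤ, FactorAt ξ u i}

/-- `ξ` is recurrent: every factor occurs entirely within `(-∞,i]` and within `[i,∞)`
for every `i`. -/
def Recurrent (ξ : ℤ → Bool) : Prop :=
  ∀ u ∈ Factors ξ, ∀ i : ℤ,
    (∃ j : ℤ, j + u.length ≤ i ∧ FactorAt ξ u j) ∧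
    (∃ j : ℤ, i ≤ j ∧ FactorAt ξ u j)

/-- `ξ` is periodic. -/
def BiPeriodic (ξ : ℤ → Bool) : Prop :=
  ∃ p : ℤ, 0 < p ∧ ∀ n : ℤ, ξ n = ξ (n + p)

/-- `u` is right-determining in `F(ξ)`: for every `k` there is exactly one `v` of
length `k` with `u ++ v ∈ F(ξ)`. -/
def RightDet (ξ : ℤ → Bool) (u : List Bool) : Prop :=
  ∀ k : ℕ, ∃! v : List Bool, v.length = k ∧ u ++ v ∈ Factors ξ

/-- `u` is left-determining in `F(ξ)`. -/
def LeftDet (ξ : ℤ → Bool) (u : List Bool) : Prop :=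
  ∀ k : ℕ, ∃! v : List Bool, v.length = k ∧ v ++ u ∈ Factors ξ

def window (ξ : ℤ → Bool) (i : ℤ) (t : ℕ) : List Bool :=
  List.ofFn fun d : Fin t => ξ (i + d)

variable {ξ : ℤ → Bool} {u v : List Bool}

@[simp]
lemma length_window (i : ℤ) (t : ℕ) : (window ξ i t).length = t := by
  simp [window]

lemma factorAt_window (i : ℤ) (t : ℕ) : FactorAt ξ (window ξ i t) i := by
  intro k hk
  simp_all [window, List.getD_eq_getElem?_getD]

lemma FactorAt.append {i : ℤ} (hv : FactorAt ξ v i) (hu : FactorAt ξ u (i + v.length)) :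
    FactorAt ξ (v ++ u) i := by
  intro k hk
  rw [List.length_append] at hk
  by_cases hkv : k < v.length
  · rw [List.getD_append _ _ _ _ hkv]
    exact hv k hkv
  · rw [List.getD_append_right _ _ _ _ (by omega), hu (k - v.length) (by omega)]
    congr 1
    omega

lemma LeftDet.window_eq (hdet : LeftDet ξ u) {a b : ℤ} (ha : FactorAt ξ u a)
    (hb : FactorAt ξ u b) (t : ℕ) : window ξ (a - t) t = window ξ (b - t) t := by
  have occurs (c : ℤ) (hc : FactorAt ξ u c) : window ξ (c - t) t ++ u ∈ Factors ξ :=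
    ⟨c - t, (factorAt_window _ t).append (by simpa using hc)⟩
  exact (hdet t).unique ⟨length_window _ t, occurs a ha⟩ ⟨length_window _ t, occurs b hb⟩

lemma LeftDet.apply_eq_of_lt (hdet : LeftDet ξ u) {a b n : ℤ} (ha : FactorAt ξ u a)
    (hb : FactorAt ξ u b) (hn : n < a) : ξ n = ξ (n + (b - a)) := by
  obtain ⟨t, rfl⟩ : ∃ t : ℕ, a = n + (t + 1) := ⟨(a - n - 1).toNat, by omega⟩
  have h := congrArg List.head? (hdet.window_eq ha hb (t + 1))
  simp only [window, List.ofFn_succ, List.head?_cons, Option.some.injEq, Fin.val_zero,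
    Nat.cast_zero, add_zero] at h
  convert h using 2 <;> push_cast <;> ring

theorem left_determining_implies_periodic (ξ : ℤ → Bool) (hrec : Recurrent ξ)
    (u : List Bool) (hu : u ∈ Factors ξ) (hdet : LeftDet ξ u) :
    BiPeriodic ξ := by
  obtain ⟨b, hb⟩ := hu
  obtain ⟨-, a, hba, ha⟩ := hrec u ⟨b, hb⟩ (b + 1)
  refine ⟨a - b, by omega, fun n => ?_⟩
  obtain ⟨-, m, hm, hmu⟩ := hrec u ⟨b, hb⟩ (n + (a - b) + 1)
  calc ξ n = ξ (n + (a - m)) := hdet.apply_eq_of_lt hmu ha (by omega)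
    _ = ξ (n + (a - b) + (b - m)) := by congr 1; ring
    _ = ξ (n + (a - b)) := (hdet.apply_eq_of_lt hmu hb (by omega)).symm
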